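/- Let m, n ≥ 1 and let r : ℝ^m → ℝ^n be twice continuously differentiable on an open set U ⊆ ℝ^m. Let ξ ∈ U and h > 0, and suppose there is σ > 0 such that ‖Dr(ξ)u‖ ≥ σ‖u‖ for every u ∈ ℝ^m. Set ρ = h / σ and assume the closed ball of radius ρ centered at ξ is contained in U. Then for every unit vector s ∈ ℝ^m, with α = h / ‖Dr(ξ)s‖ and η = ξ + α s, the spacing error Δh(ξ,s) = h − ‖r(η) − r(ξ)‖ satisfies |Δh(ξ,s)| ≤ (√n / 2) · h² · (max over components i = 1,…,n of sup_{ζ ∈ closed ball B̄(ξ, ρ)} ‖D²r_i(ζ)‖) / σ², where ‖D²r_i(ζ)‖ denotes the operator norm of the second derivative (Hessian) of the i-th coordinate function r_i of r at ζ. -/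

import Mathlib

/-!
Because `‖Dr(ξ)(α s)‖ = h`, the spacing error is at most the norm of the first-order Taylor
remainder `r(η) - r(ξ) - Dr(ξ)(α s)`. For each component `r_i`, two applications of the mean value
inequality along the segment `[ξ, η]` bound this remainder by `sup ‖D²r_i‖ · α² / 2`; passing to
the Euclidean norm costs `√n`, and `α ≤ h / σ = ρ` keeps the segment inside `B̄(ξ, ρ)`.
-/

open Metric Set

theorem EuclideanSpace.norm_le_sqrt_card_mul {ι 𝕜 : Type*} [Fintype ι] [RCLike 𝕜]
    {w : EuclideanSpace 𝕜 ι} {C : ℝ} (hw : ∀ i, ‖w i‖ ≤ C) :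
    ‖w‖ ≤ √(Fintype.card ι) * C := by
  cases isEmpty_or_nonempty ι
  · simp [EuclideanSpace.norm_eq]
  have hC : 0 ≤ C := (norm_nonneg _).trans (hw (Classical.arbitrary ι))
  rw [EuclideanSpace.norm_eq, ← Real.sqrt_sq hC, ← Real.sqrt_mul (Nat.cast_nonneg _)]
  gcongr
  calc ∑ i, ‖w i‖ ^ 2 ≤ ∑ _i : ι, C ^ 2 := by gcongr; exact hw _
    _ = _ := by simp

theorem IsCompact.le_ciSup_biSup {ι X : Type*} [Finite ι] [TopologicalSpace X] {K : Set X}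
    (hK : IsCompact K) {g : ι → X → ℝ} (hg : ∀ i, ContinuousOn (g i) K) {i : ι} {x : X}
    (hx : x ∈ K) : g i x ≤ ⨆ i, ⨆ x ∈ K, g i x := by
  have hbdd : BddAbove (⋃ y, range fun _ : y ∈ K => g i y) :=
    (hK.bddAbove_image (hg i)).mono (by rintro _ ⟨_, ⟨y, rfl⟩, ⟨hy, rfl⟩⟩; exact ⟨y, hy, rfl⟩)
  exact (le_ciSup₂ (f := fun y (_ : y ∈ K) => g i y) hbdd x hx).trans
    (le_ciSup (f := fun i => ⨆ x ∈ K, g i x) (finite_range _).bddAbove i)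

theorem norm_sub_sub_deriv_le_of_norm_deriv2_le {E : Type*} [NormedAddCommGroup E]
    [NormedSpace ℝ E] {g g' g'' : ℝ → E} {C : ℝ}
    (hg : ∀ t ∈ Icc (0 : ℝ) 1, HasDerivAt g (g' t) t)
    (hg' : ∀ t ∈ Icc (0 : ℝ) 1, HasDerivAt g' (g'' t) t)
    (hC : ∀ t ∈ Icc (0 : ℝ) 1, ‖g'' t‖ ≤ C) :
    ‖g 1 - g 0 - g' 0‖ ≤ C / 2 := by
  have hg'_sub : ∀ t ∈ Icc (0 : ℝ) 1, ‖g' t - g' 0‖ ≤ C * t := by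
    simpa using norm_image_sub_le_of_norm_deriv_le_segment'
      (fun t ht => (hg' t ht).hasDerivWithinAt) (fun t ht => hC t (Ico_subset_Icc_self ht))
  have hrem : ∀ t ∈ Icc (0 : ℝ) 1,
      HasDerivAt (fun u => g u - g 0 - u • g' 0) (g' t - g' 0) t := fun t ht =>
    (((hg t ht).sub_const (g 0)).sub ((hasDerivAt_id t).smul_const (g' 0))).congr_deriv
      (by simp)
  have hB : ∀ t : ℝ, HasDerivAt (fun u => C * u ^ 2 / 2) (C * t) t := fun t =>
    (((hasDerivAt_pow 2 t).const_mul C).div_const 2).congr_deriv (by norm_num; ring)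
  simpa using image_norm_le_of_norm_deriv_right_le_deriv_boundary
    (fun t ht => (hrem t ht).continuousAt.continuousWithinAt)
    (fun t ht => (hrem t (Ico_subset_Icc_self ht)).hasDerivWithinAt) (by simp) hB
    (fun t ht => hg'_sub t (Ico_subset_Icc_self ht)) (right_mem_Icc.2 zero_le_one)

theorem norm_sub_sub_fderiv_le_of_norm_iteratedFDeriv_two_le {E F : Type*}
    [NormedAddCommGroup E] [NormedSpace ℝ E] [NormedAddCommGroup F] [NormedSpace ℝ F]
    {f : E → F} {x v : E} {C : ℝ}
    (hf : ∀ y ∈ segment ℝ x (x + v), ContDiffAt ℝ 2 f y)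
    (hC : ∀ y ∈ segment ℝ x (x + v), ‖iteratedFDeriv ℝ 2 f y‖ ≤ C) :
    ‖f (x + v) - f x - fderiv ℝ f x v‖ ≤ C * ‖v‖ ^ 2 / 2 := by
  have hseg : ∀ t ∈ Icc (0 : ℝ) 1, x + t • v ∈ segment ℝ x (x + v) := fun t ht => by
    rw [segment_eq_image']; exact ⟨t, ht, by simp⟩
  have hline : ∀ t : ℝ, HasDerivAt (fun u : ℝ => x + u • v) v t := fun t => by
    simpa using ((hasDerivAt_id t).smul_const v).const_add x
  have key := norm_sub_sub_deriv_le_of_norm_deriv2_le (g := fun t => f (x + t • v))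
    (g' := fun t => fderiv ℝ f (x + t • v) v)
    (g'' := fun t => fderiv ℝ (fderiv ℝ f) (x + t • v) v v) (C := C * ‖v‖ ^ 2) ?_ ?_ ?_
  · simpa [mul_div_assoc] using key
  · intro t ht
    exact ((hf _ (hseg t ht)).differentiableAt two_ne_zero).hasFDerivAt.comp_hasDerivAt t
      (hline t)
  · intro t ht
    have hd := ((hf _ (hseg t ht)).fderiv_right le_rfl).differentiableAt one_ne_zero
    have hcomp : HasDerivAt (fun u : ℝ => fderiv ℝ f (x + u • v))
        (fderiv ℝ (fderiv ℝ f) (x + t • v) v) t := hd.hasFDerivAt.comp_hasDerivAt t (hline t)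
    simpa using hcomp.clm_apply (hasDerivAt_const t v)
  · intro t ht
    calc ‖fderiv ℝ (fderiv ℝ f) (x + t • v) v v‖
        ≤ ‖fderiv ℝ (fderiv ℝ f) (x + t • v)‖ * ‖v‖ * ‖v‖ :=
          (fderiv ℝ (fderiv ℝ f) (x + t • v)).le_opNorm₂ v v
      _ = ‖iteratedFDeriv ℝ 2 f (x + t • v)‖ * ‖v‖ ^ 2 := by
          rw [← norm_iteratedFDeriv_fderiv, norm_iteratedFDeriv_one]; ring
      _ ≤ C * ‖v‖ ^ 2 := by gcongr; exact hC _ (hseg t ht)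

theorem EuclideanSpace.norm_sub_sub_fderiv_le {E ι : Type*} [NormedAddCommGroup E]
    [NormedSpace ℝ E] [Fintype ι] {f : E → EuclideanSpace ℝ ι} {x v : E} {C : ℝ}
    (hf : ∀ y ∈ segment ℝ x (x + v), ContDiffAt ℝ 2 f y)
    (hC : ∀ i, ∀ y ∈ segment ℝ x (x + v), ‖iteratedFDeriv ℝ 2 (fun z => f z i) y‖ ≤ C) :
    ‖f (x + v) - f x - fderiv ℝ f x v‖ ≤ √(Fintype.card ι) * (C * ‖v‖ ^ 2 / 2) := by
  refine EuclideanSpace.norm_le_sqrt_card_mul fun i => ?_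
  have hfx := (hf x (left_mem_segment ℝ _ _)).differentiableAt two_ne_zero
  have hfderiv_i : HasFDerivAt (fun z => f z i) (PiLp.proj 2 _ i ∘L fderiv ℝ f x) x :=
    (PiLp.hasFDerivAt_apply (𝕜 := ℝ) 2 (f x) i).comp x hfx.hasFDerivAt
  simpa [hfderiv_i.fderiv] using norm_sub_sub_fderiv_le_of_norm_iteratedFDeriv_two_le
    (f := fun z => f z i) (fun y hy => contDiffAt_euclidean.1 (hf y hy) i) (hC i)

theorem spacing_error_bound_pointwise_general
    (m n : ℕ)
    (r : EuclideanSpace ℝ (Fin m) → EuclideanSpace ℝ (Fin n))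
    (U : Set (EuclideanSpace ℝ (Fin m))) (hU : IsOpen U)
    (hr : ContDiffOn ℝ 2 r U)
    (ξ : EuclideanSpace ℝ (Fin m))
    (h : ℝ) (hh : 0 < h)
    (σ : ℝ) (hσ : 0 < σ)
    (hsing : ∀ u : EuclideanSpace ℝ (Fin m), σ * ‖u‖ ≤ ‖fderiv ℝ r ξ u‖)
    (ρ : ℝ) (hρ : ρ = h / σ)
    (hball : Metric.closedBall ξ ρ ⊆ U) :
    ∀ s : EuclideanSpace ℝ (Fin m), ‖s‖ = 1 →
      ∀ α : ℝ, α = h / ‖fderiv ℝ r ξ s‖ →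
        ∀ η : EuclideanSpace ℝ (Fin m), η = ξ + α • s →
          |h - ‖r η - r ξ‖| ≤
            Real.sqrt n / 2 * h ^ 2 *
              (⨆ i : Fin n, ⨆ ζ ∈ Metric.closedBall ξ ρ,
                ‖iteratedFDeriv ℝ 2 (fun x => r x i) ζ‖) / σ ^ 2 := by
  rintro s hs α hα η rfl
  set M := ⨆ i : Fin n, ⨆ ζ ∈ closedBall ξ ρ, ‖iteratedFDeriv ℝ 2 (fun x => r x i) ζ‖
  have hDs : σ ≤ ‖fderiv ℝ r ξ s‖ := by simpa [hs] using hsing s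
  have hα0 : 0 ≤ α := by rw [hα]; positivity
  have hαρ : α ≤ ρ := by rw [hα, hρ]; gcongr
  have hαs : ‖α • s‖ = α := by rw [norm_smul, hs, Real.norm_of_nonneg hα0, mul_one]
  have hseg : segment ℝ ξ (ξ + α • s) ⊆ closedBall ξ ρ :=
    (convex_closedBall ξ ρ).segment_subset (mem_closedBall_self (hα0.trans hαρ))
      (by rwa [mem_closedBall, dist_eq_norm, add_sub_cancel_left, hαs])
  have hM : ∀ i, ∀ ζ ∈ closedBall ξ ρ, ‖iteratedFDeriv ℝ 2 (fun x => r x i) ζ‖ ≤ M :=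
    fun i ζ hζ => (isCompact_closedBall ξ ρ).le_ciSup_biSup
      (g := fun i ζ => ‖iteratedFDeriv ℝ 2 (fun x => r x i) ζ‖) (fun i => (ContinuousOn.continuousOn_iteratedFDeriv (contDiffOn_euclidean.1 hr i) hU
        le_rfl).norm.mono hball) hζ
  have hM0 : 0 ≤ M :=
    Real.iSup_nonneg fun _ => Real.iSup_nonneg fun _ => Real.iSup_nonneg fun _ => norm_nonneg _
  have hrem := EuclideanSpace.norm_sub_sub_fderiv_le (C := M)
    (fun y hy => hr.contDiffAt (hU.mem_nhds (hball (hseg hy)))) (fun i y hy => hM i y (hseg hy))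
  have hlin : ‖fderiv ℝ r ξ (α • s)‖ = h := by
    rw [map_smul, norm_smul, Real.norm_of_nonneg hα0, hα,
      div_mul_cancel₀ _ (hσ.trans_le hDs).ne']
  calc |h - ‖r (ξ + α • s) - r ξ‖|
      ≤ ‖r (ξ + α • s) - r ξ - fderiv ℝ r ξ (α • s)‖ := by
        rw [← hlin, abs_sub_comm]; exact abs_norm_sub_norm_le _ _
    _ ≤ √n * (M * α ^ 2 / 2) := by simpa [hαs] using hrem
    _ ≤ √n * (M * ρ ^ 2 / 2) := by gcongr
    _ = √n / 2 * h ^ 2 * M / σ ^ 2 := by rw [hρ]; field_simp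

/-- Second (direction-independent, per-point) estimate of Proposition 2.1: if `σ > 0` is a lower
bound for the smallest singular value of `Dr(ξ)` and the closed ball `B̄(ξ, h/σ)` lies in `U`,
then for every unit direction `s` the spacing error satisfies
`|Δh(ξ,s)| ≤ (√n / 2) · h² · max_i sup_{ζ ∈ B̄(ξ,ρ)} ‖D²r_i(ζ)‖ / σ²`. -/
theorem spacing_error_bound_pointwise
    (m n : ℕ) (hm : 1 ≤ m) (hn : 1 ≤ n)
    (r : EuclideanSpace ℝ (Fin m) → EuclideanSpace ℝ (Fin n))
    (U : Set (EuclideanSpace ℝ (Fin m))) (hU : IsOpen U)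
    (hr : ContDiffOn ℝ 2 r U)
    (ξ : EuclideanSpace ℝ (Fin m)) (hξ : ξ ∈ U)
    (h : ℝ) (hh : 0 < h)
    (σ : ℝ) (hσ : 0 < σ)
    (hsing : ∀ u : EuclideanSpace ℝ (Fin m), σ * ‖u‖ ≤ ‖fderiv ℝ r ξ u‖)
    (ρ : ℝ) (hρ : ρ = h / σ)
    (hball : Metric.closedBall ξ ρ ⊆ U) :
    ∀ s : EuclideanSpace ℝ (Fin m), ‖s‖ = 1 →
      ∀ α : ℝ, α = h / ‖fderiv ℝ r ξ s‖ →
        ∀ η : EuclideanSpace ℝ (Fin m), η = ξ + α • s →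
          |h - ‖r η - r ξ‖| ≤
            Real.sqrt n / 2 * h ^ 2 *
              (⨆ i : Fin n, ⨆ ζ ∈ Metric.closedBall ξ ρ,
                ‖iteratedFDeriv ℝ 2 (fun x => r x i) ζ‖) / σ ^ 2 :=
  spacing_error_bound_pointwise_general m n r U hU hr ξ h hh σ hσ hsing ρ hρ hball
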